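/- For every k ≥ 1 and every vector of naturals v₀ such that v₀(d_i) = v₀(d′_i) = 0 for all i < k, the BVASS B_k has a (q^{init}_k, v₀)-rooted {q^{leaf}}-leaf-covering deduction tree if and only if v₀(d_k) ≥ tower(k). -/

import Mathlib

/-- An alternating branching VASS with full zero tests (ABVASS₀):
states `Q`, counters indexed by `ι`, with unary, fork, split, and
full-zero-test rules. -/
structure ABVASS (Q ι : Type) where
  Tu : Set (Q × (ι → ℤ) × Q)
  Tf : Set (Q × Q × Q)
  Ts : Set (Q × Q × Q)
  Tz : Set (Q × Q)

/-- Configurations: a state together with a vector of naturals. -/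
abbrev Config (Q ι : Type) := Q × (ι → ℕ)

/-- Finite deduction trees labelled by configurations, with unary and
binary internal nodes. -/
inductive DTree (Q ι : Type) where
  | leaf : Config Q ι → DTree Q ι
  | node1 : Config Q ι → DTree Q ι → DTree Q ι
  | node2 : Config Q ι → DTree Q ι → DTree Q ι → DTree Q ι

namespace DTree

variable {Q ι : Type}

/-- The root label of a deduction tree. -/
def root : DTree Q ι → Config Q ι
  | .leaf c => c
  | .node1 c _ => c
  | .node2 c _ _ => c

/-- Height: the maximum number of edges from the root to a leaf. -/
def height : DTree Q ι → ℕ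
  | .leaf _ => 0
  | .node1 _ t => t.height + 1
  | .node2 _ t₁ t₂ => max t₁.height t₂.height + 1

/-- The list of leaf labels. -/
def leaves : DTree Q ι → List (Config Q ι)
  | .leaf c => [c]
  | .node1 _ t => t.leaves
  | .node2 _ t₁ t₂ => t₁.leaves ++ t₂.leaves

end DTree

variable {Q ι : Type}

/-- Unary rule, applied top-down: from `(q, v)` derive `(q₁, v + u)`,
provided `v + u` is non-negative. -/
def UnaryStep (A : ABVASS Q ι) (c c' : Config Q ι) : Prop :=
  ∃ u, (c.1, u, c'.1) ∈ A.Tu ∧ ∀ i, (c'.2 i : ℤ) = (c.2 i : ℤ) + u i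

/-- Full zero test: from `(q, 0)` derive `(q₁, 0)`. -/
def ZeroStep (A : ABVASS Q ι) (c c' : Config Q ι) : Prop :=
  (c.1, c'.1) ∈ A.Tz ∧ c.2 = (fun _ => 0) ∧ c'.2 = (fun _ => 0)

/-- Fork (children copy the parent's vector) or split (the parent's
vector is a sum of the children's). -/
def BinStep (A : ABVASS Q ι) (c c₁ c₂ : Config Q ι) : Prop :=
  ((c.1, c₁.1, c₂.1) ∈ A.Tf ∧ c₁.2 = c.2 ∧ c₂.2 = c.2) ∨
  ((c.1, c₁.1, c₂.1) ∈ A.Ts ∧ c.2 = c₁.2 + c₂.2)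

/-- A tree is a valid deduction tree when every internal node's children
are obtained by one of the permitted steps. -/
inductive ValidTree (step1 : Config Q ι → Config Q ι → Prop)
    (step2 : Config Q ι → Config Q ι → Config Q ι → Prop) : DTree Q ι → Prop
  | leaf (c : Config Q ι) : ValidTree step1 step2 (.leaf c)
  | one {c : Config Q ι} {t : DTree Q ι} :
      step1 c t.root → ValidTree step1 step2 t → ValidTree step1 step2 (.node1 c t)
  | two {c : Config Q ι} {t₁ t₂ : DTree Q ι} :
      step2 c t₁.root t₂.root → ValidTree step1 step2 t₁ → ValidTree step1 step2 t₂ →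
      ValidTree step1 step2 (.node2 c t₁ t₂)

/-- Deduction trees of an ABVASS₀ (standard semantics). -/
def IsDeduction (A : ABVASS Q ι) : DTree Q ι → Prop :=
  ValidTree (fun c c' => UnaryStep A c c' ∨ ZeroStep A c c') (BinStep A)

/-- `tower 0 = 1`, `tower (n+1) = 2 ^ tower n`. -/
def tower : ℕ → ℕ
  | 0 => 1
  | n + 1 => 2 ^ tower n

/-- States of the BVASS hierarchy `B_k`. -/
inductive BSt where
  | qinit : ℕ → BSt
  | q1 : ℕ → BSt
  | q2 : ℕ → BSt
  | qloop : ℕ → BSt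
  | qleaf : BSt
deriving DecidableEq

/-- Counters: `Sum.inl i` is `d_i` and `Sum.inr i` is `d'_i` (for `i ≥ 1`). -/
abbrev Cnt := ℕ ⊕ ℕ

/-- The unit vector on counter `c`. -/
def e (c : Cnt) : Cnt → ℤ := fun c' => if c' = c then 1 else 0

/-- The BVASS `B_k`: `B_1` has the single unary rule
`qinit 1 →^{-2 e_{d_1}} qleaf`; for `2 ≤ j ≤ k` we add the unary rules
`qinit j →^{+e_{d_{j-1}}} q1 j`, `q1 j →^{-e_{d_{j-1}} + 2 e_{d'_{j-1}}} q1 j`,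
`q1 j →^0 q2 j`, `q2 j →^{-e_{d'_{j-1}} + e_{d_{j-1}}} q2 j`,
`qloop j →^0 qinit j`, `qloop j →^{-e_{d_j}} qinit (j-1)`, and the split
rule `q2 j → qloop j + qloop j`. -/
def Bsys (k : ℕ) : ABVASS BSt Cnt where
  Tu := {r | r = (BSt.qinit 1, -(2 • e (Sum.inl 1)), BSt.qleaf) ∨
    ∃ j, 2 ≤ j ∧ j ≤ k ∧
      (r = (BSt.qinit j, e (Sum.inl (j - 1)), BSt.q1 j) ∨
       r = (BSt.q1 j, -e (Sum.inl (j - 1)) + 2 • e (Sum.inr (j - 1)), BSt.q1 j) ∨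
       r = (BSt.q1 j, 0, BSt.q2 j) ∨
       r = (BSt.q2 j, -e (Sum.inr (j - 1)) + e (Sum.inl (j - 1)), BSt.q2 j) ∨
       r = (BSt.qloop j, 0, BSt.qinit j) ∨
       r = (BSt.qloop j, -e (Sum.inl j), BSt.qinit (j - 1)))}
  Tf := ∅
  Ts := {r | ∃ j, 2 ≤ j ∧ j ≤ k ∧ r = (BSt.q2 j, BSt.qloop j, BSt.qloop j)}
  Tz := ∅


/-!
Soundness is a potential argument. At level `j ≥ 2` let `T = tower (j - 1)`. A `qloop j` node
whose counters `d_{j-1}, d'_{j-1}` hold `x` in total needs `2 ^ (T - x)` units of `d_j`: a round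
`qloop j → qinit j → q1 j → q2 j` at most doubles `x + 1` and splits it between two `qloop j`
nodes, while leaving level `j` costs one unit of `d_j` and, by induction, needs `x ≥ T`. By
convexity of `x ↦ 2 ^ (T - x)`, splitting a total `x` costs at least `2 * 2 ^ (T - ⌈x / 2⌉)`, so
`qinit k` with `d_{k-1} = d'_{k-1} = 0` needs `2 * 2 ^ (T - 1) = tower k` units of `d_k`.

Conversely, from `d_{j-1} = 0` the rounds can be run evenly: each increments `d_{j-1}`, doubles
it, and halves both it and the budget `d_j` between two branches. After `tower (j - 1)` rounds
each of the `2 ^ tower (j - 1)` branches holds `tower (j - 1)` on `d_{j-1}` and one unit of `d_j`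
to descend with.
-/

inductive HasCoveringTree (A : ABVASS Q ι) (L : Set Q) : Config Q ι → Prop
  | leaf {q : Q} (v : ι → ℕ) : q ∈ L → HasCoveringTree A L (q, v)
  | one {c c' : Config Q ι} :
      (UnaryStep A c c' ∨ ZeroStep A c c') → HasCoveringTree A L c' → HasCoveringTree A L c
  | two {c c₁ c₂ : Config Q ι} :
      BinStep A c c₁ c₂ → HasCoveringTree A L c₁ → HasCoveringTree A L c₂ →
      HasCoveringTree A L c

namespace HasCoveringTree

variable {A : ABVASS Q ι} {L : Set Q}

theorem iff_exists_dTree {c : Config Q ι} :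
    HasCoveringTree A L c ↔
      ∃ D : DTree Q ι, IsDeduction A D ∧ D.root = c ∧ ∀ l ∈ D.leaves, l.1 ∈ L := by
  constructor
  · intro h
    induction h with
    | leaf v hq => exact ⟨.leaf (_, v), .leaf _, rfl, by simpa [DTree.leaves] using hq⟩
    | one hs _ ih =>
      obtain ⟨D, hD, rfl, hl⟩ := ih
      exact ⟨.node1 _ D, .one hs hD, rfl, hl⟩
    | two hs _ _ ih₁ ih₂ =>
      obtain ⟨D₁, hD₁, rfl, hl₁⟩ := ih₁
      obtain ⟨D₂, hD₂, rfl, hl₂⟩ := ih₂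
      refine ⟨.node2 _ D₁ D₂, .two hs hD₁ hD₂, rfl, ?_⟩
      simpa [DTree.leaves, or_imp, forall_and] using And.intro hl₁ hl₂
  · rintro ⟨D, hD, rfl, hl⟩
    induction hD with
    | leaf c => exact leaf c.2 (hl c (by simp [DTree.leaves]))
    | one hs _ ih => exact one hs (ih hl)
    | two hs _ _ ih₁ ih₂ =>
      simp only [DTree.leaves, List.mem_append, or_imp, forall_and] at hl
      exact two hs (ih₁ hl.1) (ih₂ hl.2)

theorem of_unary {q q' : Q} {v v' : ι → ℕ} {u : ι → ℤ} (hu : (q, u, q') ∈ A.Tu)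
    (hv : ∀ i, (v' i : ℤ) = v i + u i) (h : HasCoveringTree A L (q', v')) :
    HasCoveringTree A L (q, v) :=
  one (Or.inl ⟨u, hu, hv⟩) h

theorem of_split {q q₁ q₂ : Q} {v₁ v₂ : ι → ℕ} (hs : (q, q₁, q₂) ∈ A.Ts)
    (h₁ : HasCoveringTree A L (q₁, v₁)) (h₂ : HasCoveringTree A L (q₂, v₂)) :
    HasCoveringTree A L (q, v₁ + v₂) :=
  two (Or.inr ⟨hs, rfl⟩) h₁ h₂

end HasCoveringTree

theorem tower_pos (n : ℕ) : 0 < tower n := by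
  cases n <;> simp [tower]

theorem tower_succ (n : ℕ) : tower (n + 1) = 2 ^ tower n := rfl

def splitCost (T x : ℕ) : ℕ := 2 * 2 ^ (T - (x + 1) / 2)

theorem pow_sub_le_two_mul_pow_sub {T m n : ℕ} (h : m ≤ n + 1) :
    2 ^ (T - n) ≤ 2 * 2 ^ (T - m) := by
  rw [← pow_succ']
  exact Nat.pow_le_pow_right two_pos (by omega)

theorem splitCost_eq_two {T x : ℕ} (h : 2 * T ≤ x + 1) : splitCost T x = 2 := by
  simp [splitCost, Nat.sub_eq_zero_of_le (show T ≤ (x + 1) / 2 by omega)]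

theorem splitCost_antitone (T : ℕ) : Antitone (splitCost T) := fun x y h =>
  Nat.mul_le_mul_left 2 (Nat.pow_le_pow_right two_pos (by omega))

theorem splitCost_le_add (T x y : ℕ) : splitCost T (x + y) ≤ 2 ^ (T - x) + 2 ^ (T - y) := by
  wlog hxy : x ≤ y generalizing x y
  · simpa only [add_comm] using this y x (by omega)
  obtain rfl | hlt := eq_or_lt_of_le hxy
  · simp [splitCost, show (x + x + 1) / 2 = x by omega, two_mul]
  · unfold splitCost
    by_cases hT : (x + y + 1) / 2 ≤ T
    · calc 2 * 2 ^ (T - (x + y + 1) / 2) = 2 ^ (T - (x + y + 1) / 2 + 1) := by ring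
        _ ≤ 2 ^ (T - x) := Nat.pow_le_pow_right two_pos (by omega)
        _ ≤ _ := Nat.le_add_right _ _
    · rw [Nat.sub_eq_zero_of_le (by omega)]
      linarith [Nat.one_le_two_pow (n := T - x), Nat.one_le_two_pow (n := T - y)]

def ZeroBelow {α : Type} [Zero α] (m : ℕ) (v : Cnt → α) : Prop :=
  ∀ i, 1 ≤ i → i < m → v (.inl i) = 0 ∧ v (.inr i) = 0

namespace ZeroBelow

variable {m : ℕ}

theorem mono {α : Type} [Zero α] {n : ℕ} {v : Cnt → α} (h : ZeroBelow m v) (hn : n ≤ m) :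
    ZeroBelow n v :=
  fun i h₁ h₂ => h i h₁ (by omega)

theorem of_step {v v' : Cnt → ℕ} {u : Cnt → ℤ} (h : ZeroBelow m v) (hu : ZeroBelow m u)
    (hv : ∀ i, (v' i : ℤ) = v i + u i) : ZeroBelow m v' := by
  intro i h₁ h₂
  have := hu i h₁ h₂
  have := h i h₁ h₂
  have := hv (.inl i)
  have := hv (.inr i)
  omega

theorem left {v₁ v₂ : Cnt → ℕ} (h : ZeroBelow m (v₁ + v₂)) : ZeroBelow m v₁ := by
  intro i h₁ h₂
  have := h i h₁ h₂
  simp only [Pi.add_apply, Nat.add_eq_zero_iff] at this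
  exact ⟨this.1.1, this.2.1⟩

theorem right {v₁ v₂ : Cnt → ℕ} (h : ZeroBelow m (v₁ + v₂)) : ZeroBelow m v₂ :=
  left (add_comm v₁ v₂ ▸ h)

end ZeroBelow

/-- At level `j` write `T = tower (j - 1)`, `a, b` for the counters `d_{j-1}, d'_{j-1}` and `t`
for `d_j`. A `qloop j` node with `a + b = x` needs `2 ^ (T - x)` on `d_j`: every restart at most
doubles `x`, and leaving level `j` costs one unit of `d_j` and needs `x ≥ T`. A `q2 j` node
splits `a + b` between two such nodes, which costs at least `splitCost T (a + b)`; `q1 j` and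
`qinit j` are measured by the value `a + b` will have on reaching `q2 j`. -/
def Invariant : BSt → (Cnt → ℕ) → Prop
  | .qinit j, v => ZeroBelow (j - 1) v →
      splitCost (tower (j - 1)) (2 * v (.inl (j - 1)) + v (.inr (j - 1)) + 2) ≤ v (.inl j)
  | .q1 j, v => ZeroBelow (j - 1) v →
      splitCost (tower (j - 1)) (2 * v (.inl (j - 1)) + v (.inr (j - 1))) ≤ v (.inl j)
  | .q2 j, v => ZeroBelow (j - 1) v →
      splitCost (tower (j - 1)) (v (.inl (j - 1)) + v (.inr (j - 1))) ≤ v (.inl j)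
  | .qloop j, v => ZeroBelow (j - 1) v →
      2 ^ (tower (j - 1) - (v (.inl (j - 1)) + v (.inr (j - 1)))) ≤ v (.inl j)
  | .qleaf, _ => True

theorem tower_le_splitCost {i : ℕ} (hi : 1 ≤ i) {v : Cnt → ℕ} (hv : ZeroBelow i v) :
    tower i ≤ splitCost (tower (i - 1)) (2 * v (.inl (i - 1)) + v (.inr (i - 1)) + 2) := by
  obtain ⟨i, rfl⟩ := Nat.exists_eq_add_of_le' hi
  obtain rfl | hi := Nat.eq_zero_or_pos i
  · exact (splitCost_eq_two (by simp [tower])).ge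
  · obtain ⟨ha, hb⟩ := hv i hi (by omega)
    have := tower_pos i
    simp only [add_tsub_cancel_right, ha, hb, splitCost, tower_succ, ← pow_succ']
    exact le_of_eq (by congr 1; omega)

section Soundness

variable {j : ℕ} {v v' : Cnt → ℕ}

theorem invariant_qinit_one (hv : ∀ i, (v' i : ℤ) = v i + (-(2 • e (.inl 1))) i) :
    Invariant (.qinit 1) v := by
  intro _
  have h1 : (v' (.inl 1) : ℤ) = v (.inl 1) - 2 := by simpa [e, sub_eq_add_neg] using hv (.inl 1)
  rw [splitCost_eq_two (by simp [tower])]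
  omega

theorem invariant_qinit_of_q1 (hj : 2 ≤ j) (hv : ∀ i, (v' i : ℤ) = v i + e (.inl (j - 1)) i)
    (h : Invariant (.q1 j) v') : Invariant (.qinit j) v := by
  intro hz
  have ha : (v' (.inl (j - 1)) : ℤ) = v (.inl (j - 1)) + 1 := by simpa [e] using hv (.inl (j - 1))
  have hb : v' (.inr (j - 1)) = v (.inr (j - 1)) := by simpa [e] using hv (.inr (j - 1))
  have ht : v' (.inl j) = v (.inl j) := by simpa [e, show j ≠ j - 1 by omega] using hv (.inl j)
  have := h (hz.of_step (fun i _ _ => by simp [e]; omega) hv)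
  convert this using 2 <;> omega

theorem invariant_q1_of_q1 (hj : 2 ≤ j)
    (hv : ∀ i, (v' i : ℤ) = v i + (-e (.inl (j - 1)) + 2 • e (.inr (j - 1))) i)
    (h : Invariant (.q1 j) v') : Invariant (.q1 j) v := by
  intro hz
  have ha : (v' (.inl (j - 1)) : ℤ) = v (.inl (j - 1)) - 1 := by
    simpa [e, sub_eq_add_neg] using hv (.inl (j - 1))
  have hb : (v' (.inr (j - 1)) : ℤ) = v (.inr (j - 1)) + 2 := by simpa [e] using hv (.inr (j - 1))
  have ht : v' (.inl j) = v (.inl j) := by simpa [e, show j ≠ j - 1 by omega] using hv (.inl j)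
  have := h (hz.of_step (fun i _ _ => by simp [e]; omega) hv)
  convert this using 2 <;> omega

theorem invariant_q1_of_q2 (hv : ∀ i, (v' i : ℤ) = v i + (0 : Cnt → ℤ) i)
    (h : Invariant (.q2 j) v') : Invariant (.q1 j) v := by
  have hvv : v' = v := funext fun i => by simpa using hv i
  subst hvv
  exact fun hz => (splitCost_antitone _ (by omega)).trans (h hz)

theorem invariant_q2_of_q2 (hj : 2 ≤ j)
    (hv : ∀ i, (v' i : ℤ) = v i + (-e (.inr (j - 1)) + e (.inl (j - 1))) i)
    (h : Invariant (.q2 j) v') : Invariant (.q2 j) v := by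
  intro hz
  have ha : (v' (.inl (j - 1)) : ℤ) = v (.inl (j - 1)) + 1 := by simpa [e] using hv (.inl (j - 1))
  have hb : (v' (.inr (j - 1)) : ℤ) = v (.inr (j - 1)) - 1 := by
    simpa [e, sub_eq_add_neg] using hv (.inr (j - 1))
  have ht : v' (.inl j) = v (.inl j) := by simpa [e, show j ≠ j - 1 by omega] using hv (.inl j)
  have := h (hz.of_step (fun i _ _ => by simp [e]; omega) hv)
  convert this using 2 <;> omega

theorem invariant_qloop_of_qinit (hv : ∀ i, (v' i : ℤ) = v i + (0 : Cnt → ℤ) i)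
    (h : Invariant (.qinit j) v') : Invariant (.qloop j) v := by
  have hvv : v' = v := funext fun i => by simpa using hv i
  subst hvv
  exact fun hz => (pow_sub_le_two_mul_pow_sub (by omega)).trans (h hz)

theorem invariant_qloop_of_descend (hj : 2 ≤ j)
    (hv : ∀ i, (v' i : ℤ) = v i + (-e (.inl j)) i)
    (h : Invariant (.qinit (j - 1)) v') : Invariant (.qloop j) v := by
  intro hz
  have ha : v' (.inl (j - 1)) = v (.inl (j - 1)) := by
    simpa [e, show j - 1 ≠ j by omega] using hv (.inl (j - 1))
  have ht : (v' (.inl j) : ℤ) = v (.inl j) - 1 := by simpa [e, sub_eq_add_neg] using hv (.inl j)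
  have hz' : ZeroBelow (j - 1) v' := hz.of_step (fun i _ _ => by simp [e]; omega) hv
  have hT := (tower_le_splitCost (by omega) hz').trans (h (hz'.mono (by omega)))
  rw [Nat.sub_eq_zero_of_le (by omega), pow_zero]
  omega

theorem invariant_q2_of_split {v₁ v₂ : Cnt → ℕ} (h₁ : Invariant (.qloop j) v₁)
    (h₂ : Invariant (.qloop j) v₂) : Invariant (.q2 j) (v₁ + v₂) := by
  intro hz
  have := (splitCost_le_add _ _ _).trans (add_le_add (h₁ hz.left) (h₂ hz.right))
  rwa [Pi.add_apply, Pi.add_apply, add_add_add_comm]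

end Soundness

theorem HasCoveringTree.invariant {k : ℕ} {c : Config BSt Cnt}
    (h : HasCoveringTree (Bsys k) {.qleaf} c) : Invariant c.1 c.2 := by
  induction h with
  | leaf v hq => rw [Set.mem_singleton_iff.mp hq]; trivial
  | @one c c' hs _ ih =>
    obtain ⟨q, v⟩ := c
    obtain ⟨q', v'⟩ := c'
    obtain ⟨u, hu, hv⟩ | ⟨hz, -⟩ := hs
    · rcases hu with hr | ⟨j, hj, -, hr | hr | hr | hr | hr | hr⟩ <;> cases hr
      · exact invariant_qinit_one hv
      · exact invariant_qinit_of_q1 hj hv ih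
      · exact invariant_q1_of_q1 hj hv ih
      · exact invariant_q1_of_q2 hv ih
      · exact invariant_q2_of_q2 hj hv ih
      · exact invariant_qloop_of_qinit hv ih
      · exact invariant_qloop_of_descend hj hv ih
    · exact absurd hz (Set.notMem_empty _)
  | @two c c₁ c₂ hs _ _ ih₁ ih₂ =>
    obtain ⟨hf, -⟩ | ⟨⟨j, -, -, hr⟩, hsum⟩ := hs
    · exact absurd hf (Set.notMem_empty _)
    obtain ⟨q, v⟩ := c
    obtain ⟨q₁, v₁⟩ := c₁
    obtain ⟨q₂, v₂⟩ := c₂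
    cases hr
    obtain rfl : v = v₁ + v₂ := hsum
    exact invariant_q2_of_split ih₁ ih₂

def levelVec (j a b t : ℕ) (w : Cnt → ℕ) : Cnt → ℕ := fun c =>
  if c = .inl (j - 1) then a else if c = .inr (j - 1) then b else if c = .inl j then t else w c

theorem levelVec_add {j a₁ a₂ t₁ t₂ : ℕ} {w : Cnt → ℕ} :
    levelVec j (a₁ + a₂) 0 (t₁ + t₂) w = levelVec j a₁ 0 t₁ 0 + levelVec j a₂ 0 t₂ w := by
  funext c
  simp only [levelVec, Pi.add_apply]
  split_ifs <;> simp

theorem ZeroBelow.levelVec {j a b t : ℕ} {w : Cnt → ℕ} (h : ZeroBelow (j - 1) w) :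
    ZeroBelow (j - 1) (levelVec j a b t w) := by
  intro i h₁ h₂
  simpa [_root_.levelVec, show i ≠ j - 1 by omega, show i ≠ j by omega] using h i h₁ h₂

section Completeness

variable {k j a b t : ℕ} {w : Cnt → ℕ}

theorem cover_qinit_of_q1 (hj : 2 ≤ j) (hk : j ≤ k)
    (h : HasCoveringTree (Bsys k) {.qleaf} (.q1 j, levelVec j (a + 1) b t w)) :
    HasCoveringTree (Bsys k) {.qleaf} (.qinit j, levelVec j a b t w) :=
  h.of_unary (u := e (.inl (j - 1))) (Or.inr ⟨j, hj, hk, by simp⟩) fun i => by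
    unfold levelVec
    split_ifs <;> simp_all [e]

theorem cover_q1_of_q1 (hj : 2 ≤ j) (hk : j ≤ k)
    (h : HasCoveringTree (Bsys k) {.qleaf} (.q1 j, levelVec j a (b + 2) t w)) :
    HasCoveringTree (Bsys k) {.qleaf} (.q1 j, levelVec j (a + 1) b t w) :=
  h.of_unary (u := -e (.inl (j - 1)) + 2 • e (.inr (j - 1))) (Or.inr ⟨j, hj, hk, by simp⟩)
    fun i => by
      unfold levelVec
      split_ifs <;> simp_all [e]

theorem cover_q1_of_q2 (hj : 2 ≤ j) (hk : j ≤ k) {v : Cnt → ℕ}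
    (h : HasCoveringTree (Bsys k) {.qleaf} (.q2 j, v)) :
    HasCoveringTree (Bsys k) {.qleaf} (.q1 j, v) :=
  h.of_unary (u := 0) (Or.inr ⟨j, hj, hk, by simp⟩) (by simp)

theorem cover_q2_of_q2 (hj : 2 ≤ j) (hk : j ≤ k)
    (h : HasCoveringTree (Bsys k) {.qleaf} (.q2 j, levelVec j (a + 1) b t w)) :
    HasCoveringTree (Bsys k) {.qleaf} (.q2 j, levelVec j a (b + 1) t w) :=
  h.of_unary (u := -e (.inr (j - 1)) + e (.inl (j - 1))) (Or.inr ⟨j, hj, hk, by simp⟩)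
    fun i => by
      unfold levelVec
      split_ifs <;> simp_all [e]

theorem cover_qloop_of_qinit (hj : 2 ≤ j) (hk : j ≤ k) {v : Cnt → ℕ}
    (h : HasCoveringTree (Bsys k) {.qleaf} (.qinit j, v)) :
    HasCoveringTree (Bsys k) {.qleaf} (.qloop j, v) :=
  h.of_unary (u := 0) (Or.inr ⟨j, hj, hk, by simp⟩) (by simp)

theorem cover_qloop_of_descend (hj : 2 ≤ j) (hk : j ≤ k)
    (h : HasCoveringTree (Bsys k) {.qleaf} (.qinit (j - 1), levelVec j a b t w)) :
    HasCoveringTree (Bsys k) {.qleaf} (.qloop j, levelVec j a b (t + 1) w) :=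
  h.of_unary (u := -e (.inl j)) (Or.inr ⟨j, hj, hk, by simp⟩) fun i => by
    unfold levelVec
    split_ifs <;> simp_all [e, show j - 1 ≠ j by omega]

theorem cover_q1_of_q1_iterate (hj : 2 ≤ j) (hk : j ≤ k) :
    ∀ a b, HasCoveringTree (Bsys k) {.qleaf} (.q1 j, levelVec j 0 (b + 2 * a) t w) →
      HasCoveringTree (Bsys k) {.qleaf} (.q1 j, levelVec j a b t w)
  | 0, _, h => h
  | a + 1, b, h => cover_q1_of_q1 hj hk <|
      cover_q1_of_q1_iterate hj hk a (b + 2) (by rwa [show b + 2 + 2 * a = b + 2 * (a + 1) by ring])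

theorem cover_q2_of_q2_iterate (hj : 2 ≤ j) (hk : j ≤ k) :
    ∀ b a, HasCoveringTree (Bsys k) {.qleaf} (.q2 j, levelVec j (a + b) 0 t w) →
      HasCoveringTree (Bsys k) {.qleaf} (.q2 j, levelVec j a b t w)
  | 0, _, h => h
  | b + 1, a, h => cover_q2_of_q2 hj hk <|
      cover_q2_of_q2_iterate hj hk b (a + 1) (by rwa [add_right_comm, add_assoc])

theorem cover_qinit_of_qloop (hj : 2 ≤ j) (hk : j ≤ k) {m s₁ s₂ : ℕ}
    (h₁ : HasCoveringTree (Bsys k) {.qleaf} (.qloop j, levelVec j (m + 1) 0 s₁ 0))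
    (h₂ : HasCoveringTree (Bsys k) {.qleaf} (.qloop j, levelVec j (m + 1) 0 s₂ w)) :
    HasCoveringTree (Bsys k) {.qleaf} (.qinit j, levelVec j m 0 (s₁ + s₂) w) := by
  have h : HasCoveringTree (Bsys k) {.qleaf} (.q2 j, levelVec j (m + 1 + (m + 1)) 0 (s₁ + s₂) w) :=
    levelVec_add ▸ HasCoveringTree.of_split ⟨j, hj, hk, rfl⟩ h₁ h₂
  refine cover_qinit_of_q1 hj hk <| cover_q1_of_q1_iterate hj hk (m + 1) 0 <|
    cover_q1_of_q2 hj hk <| cover_q2_of_q2_iterate hj hk _ 0 ?_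
  rwa [show 0 + (0 + 2 * (m + 1)) = m + 1 + (m + 1) by ring]

theorem cover_qloop_of_lower (hj : 2 ≤ j) (hk : j ≤ k)
    (hlow : ∀ v, ZeroBelow (j - 1) v → tower (j - 1) ≤ v (.inl (j - 1)) →
      HasCoveringTree (Bsys k) {.qleaf} (.qinit (j - 1), v)) (r : ℕ) :
    ∀ m s w, ZeroBelow (j - 1) w → 2 ^ r ≤ s → tower (j - 1) ≤ m + r →
      HasCoveringTree (Bsys k) {.qleaf} (.qloop j, levelVec j m 0 s w) := by
  induction r with
  | zero =>
    intro m s w hw hs hm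
    obtain ⟨s, rfl⟩ := Nat.exists_eq_add_of_le' hs
    exact cover_qloop_of_descend hj hk <| hlow _ hw.levelVec (by simpa [levelVec] using hm)
  | succ r ih =>
    intro m s w hw hs hm
    obtain ⟨s, rfl⟩ := Nat.exists_eq_add_of_le hs
    rw [pow_succ, mul_two, add_assoc]
    exact cover_qloop_of_qinit hj hk <| cover_qinit_of_qloop hj hk
      (ih _ _ _ (fun _ _ _ => ⟨rfl, rfl⟩) le_rfl (by omega)) (ih _ _ _ hw (by omega) (by omega))

theorem cover_qinit_of_lower (hj : 2 ≤ j) (hk : j ≤ k)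
    (hlow : ∀ v, ZeroBelow (j - 1) v → tower (j - 1) ≤ v (.inl (j - 1)) →
      HasCoveringTree (Bsys k) {.qleaf} (.qinit (j - 1), v)) {v : Cnt → ℕ} (hv : ZeroBelow j v)
    (ht : tower j ≤ v (.inl j)) : HasCoveringTree (Bsys k) {.qleaf} (.qinit j, v) := by
  obtain ⟨r, hr⟩ := Nat.exists_eq_add_one.mpr (tower_pos (j - 1))
  have htower : tower j = 2 ^ r + 2 ^ r := by
    rw [← two_mul, ← pow_succ', ← hr, ← tower_succ, Nat.sub_add_cancel (by omega)]
  obtain ⟨s, hs⟩ := Nat.exists_eq_add_of_le ht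
  obtain ⟨ha, hb⟩ := hv (j - 1) (by omega) (by omega)
  have hvec : v = levelVec j 0 0 (2 ^ r + (2 ^ r + s)) v := by
    funext c
    unfold levelVec
    split_ifs <;> simp_all [add_assoc]
  rw [hvec]
  exact cover_qinit_of_qloop hj hk
    (cover_qloop_of_lower hj hk hlow r _ _ _ (fun _ _ _ => ⟨rfl, rfl⟩) le_rfl (by omega))
    (cover_qloop_of_lower hj hk hlow r _ _ _ (hv.mono (by omega)) (by omega) (by omega))

end Completeness

theorem cover_qinit_one {k : ℕ} {v : Cnt → ℕ} (hv : 2 ≤ v (.inl 1)) :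
    HasCoveringTree (Bsys k) {.qleaf} (.qinit 1, v) :=
  HasCoveringTree.of_unary (u := -(2 • e (.inl 1))) (Or.inl rfl)
    (v' := Function.update v (.inl 1) (v (.inl 1) - 2))
    (fun i => by by_cases hi : i = .inl 1 <;> simp [hi, e]; omega) (.leaf _ rfl)

theorem cover_qinit {k : ℕ} : ∀ {j : ℕ}, 1 ≤ j → j ≤ k → ∀ {v : Cnt → ℕ}, ZeroBelow j v →
    tower j ≤ v (.inl j) → HasCoveringTree (Bsys k) {.qleaf} (.qinit j, v)
  | 1, _, _, _, _, ht => cover_qinit_one ht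
  | j + 2, _, hk, _, hv, ht =>
    cover_qinit_of_lower (by omega) hk (fun _ hv' ht' => cover_qinit (by omega) (by omega) hv' ht')
      hv ht

/-- For every `k ≥ 1` and vector `v₀` with `v₀ (d_i) = v₀ (d'_i) = 0` for
all `1 ≤ i < k`, the BVASS `B_k` has a `(qinit k, v₀)`-rooted
`{qleaf}`-leaf-covering deduction tree iff `v₀ (d_k) ≥ tower k`. -/
theorem Bk_correct (k : ℕ) (hk : 1 ≤ k) (v₀ : Cnt → ℕ)
    (h0 : ∀ i, 1 ≤ i → i < k → v₀ (Sum.inl i) = 0 ∧ v₀ (Sum.inr i) = 0) :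
    (∃ D : DTree BSt Cnt, IsDeduction (Bsys k) D ∧ D.root = (BSt.qinit k, v₀) ∧
      ∀ l ∈ D.leaves, l.1 = BSt.qleaf) ↔ tower k ≤ v₀ (Sum.inl k) := by
  have hz : ZeroBelow k v₀ := h0
  refine HasCoveringTree.iff_exists_dTree.symm.trans ⟨fun h => ?_, cover_qinit hk le_rfl hz⟩
  exact (tower_le_splitCost hk hz).trans (h.invariant (hz.mono (by omega)))
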